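/- Let Δ ⊆ ℂ be open and H a real normed space carrying a compatible right quaternionic module structure (as in the context). Let T be a continuous right linear operator on H and γ : Δ → H an infinitely ℝ-differentiable right holomorphic map with right holomorphic iterated derivatives, satisfying Tγ(ω) = γ(ω)•ω on Δ. Then for every k ≥ 1 and every ω ∈ Δ, the k-th iterate of Q_ω(T) (where Q_ω(T)x = T(Tx) − (Tx)•(2Re(ω)) + x•|ω|²) satisfies: Q_ω(T)^k γ^(j)(ω) = 0 for 0 ≤ j ≤ k−1, and Q_ω(T)^k γ^(k)(ω) = k!·γ(ω)•(ω − ω̄)^k. -/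

import Mathlib

/-
Differentiating `T γ(z) = γ(z) • z` along the real axis, where `z ↦ γ(z) • z` obeys the product
rule because real scalars act centrally, gives the Jordan-chain relations
`T γ⁽ᵏ⁾(ω) = γ⁽ᵏ⁾(ω) • ω + k γ⁽ᵏ⁻¹⁾(ω)`. Since `ω + ω̄` and `ω ω̄` are real, `Q_ω(T)` factors as
`x ↦ (T - (·) • ω̄) (T x - x • ω)`, so it sends `γ⁽ʲ⁾(ω)` to
`j (γ⁽ʲ⁻¹⁾(ω) • (ω - ω̄) + (j - 1) γ⁽ʲ⁻²⁾(ω))`: each application lowers the index along the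
chain, and induction on `k` gives both claims.
-/

open Quaternion MulOpposite

namespace Module.End

variable {R A H : Type*} [CommRing R] [Ring A] [Algebra R A] [AddCommGroup H] [Module Aᵐᵒᵖ H]

/-- `T² − T s + p` with the scalars acting on the right; for `s = 2 Re ω` and `p = |ω|²` it is
the operator `Q_ω(T)`. -/
def rightQuadratic (T : End Aᵐᵒᵖ H) (s p : R) : End Aᵐᵒᵖ H where
  toFun x := T (T x) - op (algebraMap R A s) • T x + op (algebraMap R A p) • x
  map_add' x y := by simp only [map_add, smul_add]; abel
  map_smul' a x := by
    have hc (r : R) (y : H) : op (algebraMap R A r) • a • y = a • op (algebraMap R A r) • y := by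
      rw [smul_smul, smul_smul, ← MulOpposite.algebraMap_apply, Algebra.commutes]
    simp only [map_smul, RingHom.id_apply, smul_sub, smul_add, hc]

variable {T : End Aᵐᵒᵖ H} {s p : R} {q q' : A}

theorem rightQuadratic_apply_eq_factor (hs : q + q' = algebraMap R A s)
    (hp : q * q' = algebraMap R A p) (x : H) :
    rightQuadratic T s p x = T (T x - op q • x) - op q' • (T x - op q • x) := by
  simp only [rightQuadratic, LinearMap.coe_mk, AddHom.coe_mk, ← hs, ← hp, op_add, op_mul, add_smul,
    mul_smul, map_sub, map_smul, smul_sub]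
  abel

-- At `j = 0` the truncated index `j - 1 = 0` is harmless: its coefficient `j` vanishes.
theorem rightQuadratic_apply_of_chain (hs : q + q' = algebraMap R A s)
    (hp : q * q' = algebraMap R A p) {v : ℕ → H} (hv : ∀ j, T (v j) = op q • v j + j • v (j - 1))
    (j : ℕ) : rightQuadratic T s p (v j) = j • (op (q - q') • v (j - 1) + (j - 1) • v (j - 2)) := by
  rw [rightQuadratic_apply_eq_factor hs hp, hv, add_sub_cancel_left, map_nsmul, hv,
    smul_comm (op q') j, ← smul_sub, op_sub, sub_smul, Nat.sub_sub]
  congr 1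
  abel

theorem rightQuadratic_pow_apply_of_lt (hs : q + q' = algebraMap R A s)
    (hp : q * q' = algebraMap R A p) {v : ℕ → H} (hv : ∀ j, T (v j) = op q • v j + j • v (j - 1))
    {j k : ℕ} (hjk : j < k) : (rightQuadratic T s p ^ k) (v j) = 0 := by
  induction k generalizing j with
  | zero => omega
  | succ k ih =>
    rw [pow_succ, mul_apply, rightQuadratic_apply_of_chain hs hp hv]
    rcases j with _ | j
    · simp
    · rw [map_nsmul, map_add, map_nsmul, map_smul, ih (by omega), ih (by omega)]
      simp

theorem rightQuadratic_pow_apply_self (hs : q + q' = algebraMap R A s)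
    (hp : q * q' = algebraMap R A p) {v : ℕ → H} (hv : ∀ j, T (v j) = op q • v j + j • v (j - 1))
    (k : ℕ) : (rightQuadratic T s p ^ k) (v k) = k.factorial • op ((q - q') ^ k) • v 0 := by
  induction k with
  | zero => simp
  | succ k ih =>
    have hlow : k • (rightQuadratic T s p ^ k) (v (k - 1)) = 0 := by
      rcases k.eq_zero_or_pos with rfl | hk
      · exact zero_smul _ _
      · rw [rightQuadratic_pow_apply_of_lt hs hp hv (by omega), smul_zero]
    rw [pow_succ, mul_apply, rightQuadratic_apply_of_chain hs hp hv, map_nsmul, map_add, map_nsmul,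
      map_smul, Nat.add_sub_cancel, show k + 1 - 2 = k - 1 by omega, ih, hlow, add_zero,
      smul_comm (op (q - q')) k.factorial, smul_smul (op (q - q')), ← op_mul, ← pow_succ, smul_smul,
      Nat.factorial_succ]

end Module.End

section RightQuaternionicAction

variable {H : Type*} [NormedAddCommGroup H] [NormedSpace ℝ H] [Module ℍ[ℝ]ᵐᵒᵖ H]

noncomputable def rightSMulCLM (hcont : ∀ a : ℍ[ℝ], Continuous fun x : H => op a • x)
    (hlinR : ∀ (a : ℍ[ℝ]) (r : ℝ) (x : H), op a • (r • x) = r • (op a • x)) (a : ℍ[ℝ]) :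
    H →L[ℝ] H where
  toFun x := op a • x
  map_add' := smul_add (op a)
  map_smul' := hlinR a
  cont := hcont a

noncomputable def realCLMOfRightLinear (hreal : ∀ (r : ℝ) (x : H), op ((r : ℍ[ℝ])) • x = r • x)
    (T : H →ₗ[ℍ[ℝ]ᵐᵒᵖ] H) (hT : Continuous T) : H →L[ℝ] H where
  toFun := T
  map_add' := map_add T
  map_smul' r x := by rw [← hreal, map_smul, hreal, RingHom.id_apply]
  cont := hT

theorem HasFDerivAt.hasDerivAt_comp_add_ofReal {E : Type*} [NormedAddCommGroup E]
    [NormedSpace ℝ E] {f : ℂ → E} {D : ℂ →L[ℝ] E} {z : ℂ} (hf : HasFDerivAt f D z) :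
    HasDerivAt (fun t : ℝ => f (z + t)) (D 1) 0 := by
  have hline : HasDerivAt (fun t : ℝ => z + (t : ℂ)) 1 0 := by
    simpa using ((hasDerivAt_id (0 : ℝ)).ofReal_comp).const_add z
  exact hf.comp_hasDerivAt_of_eq 0 hline (by simp)

theorem eigenRelation_hasDerivAt
    (hcont : ∀ a : ℍ[ℝ], Continuous fun x : H => op a • x)
    (hlinR : ∀ (a : ℍ[ℝ]) (r : ℝ) (x : H), op a • (r • x) = r • (op a • x))
    (hreal : ∀ (r : ℝ) (x : H), op ((r : ℍ[ℝ])) • x = r • x)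
    {Δ : Set ℂ} (hΔ : IsOpen Δ) (T : H →ₗ[ℍ[ℝ]ᵐᵒᵖ] H) (hT : Continuous T) {f h : ℂ → H}
    {ω : ℂ} (hω : ω ∈ Δ) {f' h' : H} (hf : HasDerivAt (fun t : ℝ => f (ω + t)) f' 0)
    (hh : HasDerivAt (fun t : ℝ => h (ω + t)) h' 0)
    (hrel : ∀ z ∈ Δ, T (f z) = op (z : ℍ[ℝ]) • f z + h z) :
    T f' = op (ω : ℍ[ℝ]) • f' + f ω + h' := by
  have hnear : ∀ᶠ t : ℝ in nhds 0, ω + t ∈ Δ :=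
    ((continuous_const.add Complex.continuous_ofReal).tendsto' 0 ω (by simp)).eventually
      (hΔ.eventually_mem hω)
  have hL : HasDerivAt (fun t : ℝ => T (f (ω + t))) (T f') 0 :=
    (realCLMOfRightLinear hreal T hT).hasFDerivAt.comp_hasDerivAt 0 hf
  have hR : HasDerivAt (fun t : ℝ => op (ω : ℍ[ℝ]) • f (ω + t) + t • f (ω + t) + h (ω + t))
      (op (ω : ℍ[ℝ]) • f' + f ω + h') 0 := by
    convert (((rightSMulCLM hcont hlinR ω).hasFDerivAt.comp_hasDerivAt 0 hf).add
      ((hasDerivAt_id 0).smul hf)).add hh using 1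
    · rfl
    · simp [rightSMulCLM]
  refine hL.unique (hR.congr_of_eventuallyEq ?_)
  filter_upwards [hnear] with t ht
  rw [hrel _ ht, coeComplex_add, coeComplex_coe, op_add, add_smul, hreal]

theorem eigenRelation_iteratedDeriv
    (hcont : ∀ a : ℍ[ℝ], Continuous fun x : H => op a • x)
    (hlinR : ∀ (a : ℍ[ℝ]) (r : ℝ) (x : H), op a • (r • x) = r • (op a • x))
    (hreal : ∀ (r : ℝ) (x : H), op ((r : ℍ[ℝ])) • x = r • x)
    {Δ : Set ℂ} (hΔ : IsOpen Δ) (T : H →ₗ[ℍ[ℝ]ᵐᵒᵖ] H) (hT : Continuous T) {g : ℕ → ℂ → H}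
    (hg : ∀ (k : ℕ), ∀ z ∈ Δ, HasDerivAt (fun t : ℝ => g k (z + t)) (g (k + 1) z) 0)
    (heig : ∀ z ∈ Δ, T (g 0 z) = op (z : ℍ[ℝ]) • g 0 z) (k : ℕ) :
    ∀ z ∈ Δ, T (g k z) = op (z : ℍ[ℝ]) • g k z + k • g (k - 1) z := by
  induction k with
  | zero => simpa using heig
  | succ k ih =>
    intro z hz
    have hk : k • g (k - 1 + 1) z = k • g k z := by rcases k with _ | k <;> simp
    rw [eigenRelation_hasDerivAt hcont hlinR hreal hΔ T hT hz (hg k z hz)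
      ((hg (k - 1) z hz).const_smul k) ih, hk, Nat.add_sub_cancel, succ_nsmul, add_assoc,
      add_comm (g k z)]

end RightQuaternionicAction

namespace Quaternion

theorem coeComplex_add_star (z : ℂ) :
    (z : ℍ[ℝ]) + star (z : ℍ[ℝ]) = algebraMap ℝ ℍ[ℝ] (2 * z.re) := by
  rw [self_add_star', re_coeComplex, algebraMap_def]

theorem coeComplex_mul_star (z : ℂ) :
    (z : ℍ[ℝ]) * star (z : ℍ[ℝ]) = algebraMap ℝ ℍ[ℝ] (‖z‖ ^ 2) := by
  rw [self_mul_star, algebraMap_def, normSq_def', Complex.sq_norm, Complex.normSq_apply]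
  simp [sq]

end Quaternion

/-- If `γ = g 0` is right holomorphic with right holomorphic iterated
derivatives `g k` and `T γ(ω) = γ(ω) • ω` on `Δ`, then for `k ≥ 1` and `ω ∈ Δ` the `k`-th
iterate of `Q_ω(T)` kills `γ⁽ʲ⁾(ω)` for `0 ≤ j ≤ k−1` and sends `γ⁽ᵏ⁾(ω)` to
`k!·γ(ω)•(ω − ω̄)^k`. -/
theorem rightHolomorphic_section_Qpow {H : Type*} [NormedAddCommGroup H]
    [NormedSpace ℝ H] [Module ℍ[ℝ]ᵐᵒᵖ H]
    (hcont : ∀ a : ℍ[ℝ], Continuous fun x : H => op a • x)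
    (hlinR : ∀ (a : ℍ[ℝ]) (r : ℝ) (x : H), op a • (r • x) = r • (op a • x))
    (hreal : ∀ (r : ℝ) (x : H), op ((r : ℍ[ℝ])) • x = r • x)
    (Δ : Set ℂ) (hΔ : IsOpen Δ)
    (T : H →ₗ[ℍ[ℝ]ᵐᵒᵖ] H) (hTcont : Continuous T)
    (g : ℕ → ℂ → H)
    (hg : ∀ (k : ℕ), ∀ z ∈ Δ, ∃ D : ℂ →L[ℝ] H, HasFDerivAt (g k) D z ∧
      D 1 = g (k + 1) z ∧ D Complex.I = op ((Complex.I : ℂ) : ℍ[ℝ]) • g (k + 1) z)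
    (heig : ∀ ω ∈ Δ, T (g 0 ω) = op ((ω : ℍ[ℝ])) • g 0 ω) :
    ∀ k : ℕ, 1 ≤ k → ∀ ω ∈ Δ,
      (∀ j : ℕ, j ≤ k - 1 →
        (fun x : H => T (T x) - op ((2 * ω.re : ℝ) : ℍ[ℝ]) • T x
          + op ((‖ω‖ ^ 2 : ℝ) : ℍ[ℝ]) • x)^[k] (g j ω) = 0) ∧
      (fun x : H => T (T x) - op ((2 * ω.re : ℝ) : ℍ[ℝ]) • T x
          + op ((‖ω‖ ^ 2 : ℝ) : ℍ[ℝ]) • x)^[k] (g k ω) =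
        ((Nat.factorial k : ℕ) : ℝ) • (op (((ω : ℍ[ℝ]) - star ((ω : ℍ[ℝ]))) ^ k) • g 0 ω) := by
  intro k hk ω hω
  have hderiv (k : ℕ) (z : ℂ) (hz : z ∈ Δ) :
      HasDerivAt (fun t : ℝ => g k (z + t)) (g (k + 1) z) 0 := by
    obtain ⟨D, hD, hD1, -⟩ := hg k z hz
    exact hD1 ▸ hD.hasDerivAt_comp_add_ofReal
  have hv (j : ℕ) : T (g j ω) = op (ω : ℍ[ℝ]) • g j ω + j • g (j - 1) ω :=
    eigenRelation_iteratedDeriv hcont hlinR hreal hΔ T hTcont hderiv heig j ω hω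
  have hs := coeComplex_add_star ω
  have hp := coeComplex_mul_star ω
  refine ⟨fun j hj => ?_, ?_⟩
  · exact (Module.End.pow_apply _ k _).symm.trans
      (Module.End.rightQuadratic_pow_apply_of_lt hs hp hv (by omega))
  · rw [Nat.cast_smul_eq_nsmul ℝ, ← Module.End.rightQuadratic_pow_apply_self hs hp hv,
      Module.End.pow_apply]
    rfl
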